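/- Let x ∈ ℝ^n, k ∈ ℕ, and let n = n_1 + ⋯ + n_k be an integer partition with each n_i ≥ 1; set c_0 = 0 and c_i = n_1 + ⋯ + n_i. Then for every 1 ≤ i ≤ k and every index r with c_{i-1} ≤ r < c_i, the r-th entry of Q_n x equals the (r − c_{i-1})-th entry of Q_{n_i} (B_{c_i, c_{i-1}} x^{(i)}), where x^{(i)} ∈ ℝ^{c_i} is the vector of the first c_i entries of x (for i = 1, B_{c_1, 0} is interpreted as the identity I_{n_1}). -/

import Mathlib

/-
Row `t` of `Q_p` times the band matrix `B_{·,c}` convolves the binomial row `2^{-t} C(t, ·)`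
with the filter `2^{-c} C(c, ·)`, so by Vandermonde's identity it is row `t + c` of the Pascal
matrix `Q`. Since `Q` is lower triangular and its leading principal blocks are again Pascal
matrices, row `r = c_{i-1} + t` of `Q_n x` only sees the first `c_i` entries of `x`.
-/

/-- The `ℓ∞`-normalized lower-triangular Pascal matrix:
`(Q_n)_{ij} = 2^{-i} C(i, j)` for `j ≤ i`, else `0`. -/
noncomputable def Qmat (n : ℕ) : Matrix (Fin n) (Fin n) ℝ :=
  Matrix.of fun i j =>
    if (j : ℕ) ≤ (i : ℕ) then ((2 : ℝ) ^ (i : ℕ))⁻¹ * ((i : ℕ).choose (j : ℕ) : ℝ) else 0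

/-- Entry `(i, j)` of the banded binomial convolution matrix `B_{·,m}`:
`(B)_{ij} = (b_m)_{j-i} = 2^{-m} C(m, j-i)` if `0 ≤ j - i ≤ m`, else `0`. -/
noncomputable def Bent (m i j : ℕ) : ℝ :=
  if i ≤ j ∧ j ≤ i + m then ((2 : ℝ) ^ m)⁻¹ * (m.choose (j - i) : ℝ) else 0

/-- The banded binomial convolution matrix `B_{s,m}`, realized with `rows` rows (so that
`B_{s,m} = Bmat (s - m) m s`; for `m = 0` it is the identity `I_s`). -/
noncomputable def Bmat (rows m s : ℕ) : Matrix (Fin rows) (Fin s) ℝ :=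
  Matrix.of fun i j => Bent m (i : ℕ) (j : ℕ)

/-- `c_i = n_1 + ⋯ + n_i`, the partial sums of the partition `nf 1, nf 2, …`. -/
def csum (nf : ℕ → ℕ) (i : ℕ) : ℕ := ∑ j ∈ Finset.range i, nf (j + 1)

open Finset Matrix

theorem sum_range_choose_mul_choose_sub (t c j p : ℕ) (ht : t < p) :
    ∑ a ∈ range p, t.choose a * (if a ≤ j then c.choose (j - a) else 0) = (t + c).choose j := by
  set f : ℕ → ℕ := fun a => t.choose a * if a ≤ j then c.choose (j - a) else 0
  have hvan : (t + c).choose j = ∑ a ∈ range (j + 1), f a := by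
    rw [Nat.add_choose_eq, Nat.sum_antidiagonal_eq_sum_range_succ fun a b => t.choose a * c.choose b]
    refine sum_congr rfl fun a ha => ?_
    simp only [f, if_pos (Nat.lt_succ_iff.mp (mem_range.mp ha))]
  have hvanish : ∀ a, p ≤ a ∨ j < a → f a = 0 := by
    rintro a (ha | ha)
    · simp [f, Nat.choose_eq_zero_of_lt (ht.trans_le ha)]
    · simp [f, ha.not_ge]
  rw [hvan, ← sum_subset (range_subset_range.2 (min_le_left p (j + 1))),
    ← sum_subset (range_subset_range.2 (min_le_right p (j + 1)))] <;>
  · intro a _ ha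
    exact hvanish a (by rw [mem_range, not_lt, min_le_iff] at ha; omega)

theorem Qmat_apply {n : ℕ} (i j : Fin n) :
    Qmat n i j = ((2 : ℝ) ^ (i : ℕ))⁻¹ * (i : ℕ).choose j := by
  rw [Qmat, of_apply, ite_eq_left_iff, not_le]
  intro h
  rw [Nat.choose_eq_zero_of_lt h, Nat.cast_zero, mul_zero]

theorem Bent_eq (m i j : ℕ) :
    Bent m i j = ((2 : ℝ) ^ m)⁻¹ * (if i ≤ j then m.choose (j - i) else 0 : ℕ) := by
  rw [Bent]
  split_ifs with hband hij hij
  · rfl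
  · exact absurd hband.1 hij
  · rw [Nat.choose_eq_zero_of_lt (by omega), Nat.cast_zero, mul_zero]
  · rw [Nat.cast_zero, mul_zero]

theorem Qmat_mul_Bmat_apply {p c s : ℕ} (a : Fin p) (r j : Fin s) (har : (a : ℕ) + c = r) :
    (Qmat p * Bmat p c s) a j = Qmat s r j := by
  have hvan := sum_range_choose_mul_choose_sub a c j p a.isLt
  simp only [mul_apply, Qmat_apply, Bmat, of_apply, Bent_eq, ← har]
  rw [← hvan, pow_add, mul_inv, Nat.cast_sum, mul_sum, ← Fin.sum_univ_eq_sum_range]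
  refine sum_congr rfl fun b _ => ?_
  push_cast
  ring

theorem Qmat_mulVec_Bmat_mulVec {p c s : ℕ} (y : Fin s → ℝ) (a : Fin p) (r : Fin s)
    (har : (a : ℕ) + c = r) :
    (Qmat p *ᵥ (Bmat p c s *ᵥ y)) a = (Qmat s *ᵥ y) r := by
  rw [mulVec_mulVec]
  simp only [mulVec, dotProduct, Qmat_mul_Bmat_apply a r _ har]

theorem Qmat_mulVec_comp_castLE {s n : ℕ} (h : s ≤ n) (x : Fin n → ℝ) (r : Fin s) :
    (Qmat s *ᵥ (x ∘ Fin.castLE h)) r = (Qmat n *ᵥ x) (Fin.castLE h r) := by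
  obtain ⟨m, rfl⟩ := Nat.exists_eq_add_of_le h
  have htail : ∀ j : Fin m, Qmat (s + m) (Fin.castLE h r) (Fin.natAdd s j) = 0 := fun j => by
    rw [Qmat, of_apply, if_neg (by simp only [Fin.val_natAdd, Fin.val_castLE]; omega)]
  simp only [mulVec, dotProduct, Fin.sum_univ_add, htail, zero_mul, sum_const_zero, add_zero]
  refine sum_congr rfl fun j _ => ?_
  simp only [Function.comp, Qmat_apply]
  rfl

/-- Block recursion for the product `Q_n x`: for `c_{i-1} ≤ r < c_i`, entry `r` of `Q_n x`
equals entry `r - c_{i-1}` of `Q_{n_i} (B_{c_i, c_{i-1}} x^{(i)})`, where `x^{(i)}` consists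
of the first `c_i` entries of `x`. -/
theorem main_theorem_block_recursion (n k : ℕ) (nf : ℕ → ℕ)
    (hsum : csum nf k = n)
    (x : Fin n → ℝ) (i : ℕ) (hi1 : 1 ≤ i) (hik : i ≤ k)
    (r : Fin n) (hr1 : csum nf (i - 1) ≤ (r : ℕ)) (hr2 : (r : ℕ) < csum nf i) :
    (Qmat n).mulVec x r =
      (Qmat (nf i)).mulVec
        ((Bmat (nf i) (csum nf (i - 1)) (csum nf i)).mulVec
          (fun j : Fin (csum nf i) =>
            x (Fin.castLE
              (by
                have h1 : csum nf i ≤ csum nf k :=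
                  Finset.sum_le_sum_of_subset (Finset.range_subset_range.mpr hik)
                omega) j)))
        ⟨(r : ℕ) - csum nf (i - 1), by
          have h2 : csum nf ((i - 1) + 1) = csum nf (i - 1) + nf ((i - 1) + 1) :=
            Finset.sum_range_succ (fun j => nf (j + 1)) (i - 1)
          have h3 : i - 1 + 1 = i := by omega
          rw [h3] at h2
          omega⟩ := by
  have hsn : csum nf i ≤ n := hsum ▸ sum_le_sum_of_subset (range_subset_range.2 hik)
  calc (Qmat n).mulVec x r = (Qmat (csum nf i) *ᵥ (x ∘ Fin.castLE hsn)) ⟨r, hr2⟩ :=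
        (Qmat_mulVec_comp_castLE hsn x ⟨r, hr2⟩).symm
    _ = _ := (Qmat_mulVec_Bmat_mulVec _ _ _ (Nat.sub_add_cancel hr1)).symm
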